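/- arXiv:2110.10511 — 3 statements merged into one kernel-verified Lean document; each statement's English description precedes it below -/
import Mathlib

section
/- Transfer of coercivity to the kernel of a nearby projection (abstract Lemma A.2). Let H be a real Hilbert space, K ⊆ H a complete (closed) subspace, and P the orthogonal projection of H onto K. Let L : H → H be a continuous linear map and α > 0 such that ⟨L ξ, ξ⟩ ≥ α‖ξ‖² for every ξ in the orthogonal complement K^⊥. Let Q : H → H be a continuous linear map and ε ≥ 0 with ‖P − Q‖ ≤ ε and ε ≤ α/(4(α + ‖L‖)). Then for every ξ ∈ H with Q(ξ) = 0 one has ⟨L ξ, ξ⟩ ≥ (α/4)‖ξ‖². -/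
open Submodule RealInnerProductSpace

set_option maxHeartbeats 1000000 in
/-- Transfer of coercivity to the kernel of a nearby projection (abstract Lemma A.2):
if `⟨Lξ, ξ⟩ ≥ α ‖ξ‖²` on `Kᗮ`, `P` is the orthogonal projection onto `K`, and
`‖P - Q‖ ≤ ε ≤ α / (4(α + ‖L‖))`, then `⟨Lξ, ξ⟩ ≥ (α/4) ‖ξ‖²` on `ker Q`. -/
theorem coercivity_transfer_near_projection
    {H : Type*} [NormedAddCommGroup H] [InnerProductSpace ℝ H]
    (K : Submodule ℝ H) [CompleteSpace K]
    (L : H →L[ℝ] H) (α : ℝ) (hα : 0 < α)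
    (hcoer : ∀ ξ ∈ Kᗮ, α * ‖ξ‖ ^ 2 ≤ ⟪L ξ, ξ⟫)
    (Q : H →L[ℝ] H) (ε : ℝ) (hε0 : 0 ≤ ε)
    (hPQ : ‖K.subtypeL.comp (orthogonalProjection K) - Q‖ ≤ ε)
    (hεsmall : ε ≤ α / (4 * (α + ‖L‖))) :
    ∀ ξ : H, Q ξ = 0 → α / 4 * ‖ξ‖ ^ 2 ≤ ⟪L ξ, ξ⟫ := by
  intro ξ hQξ
  set P : H →L[ℝ] H := K.subtypeL.comp (orthogonalProjection K) with hP
  set p : H := P ξ with hp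
  set w : H := ξ - p with hw
  have hL0 : (0:ℝ) ≤ ‖L‖ := norm_nonneg _
  have hn0 : (0:ℝ) ≤ ‖ξ‖ := norm_nonneg _
  set n : ℝ := ‖ξ‖ with hn
  have hden : (0:ℝ) < 4 * (α + ‖L‖) := by positivity
  have hεkey : ε * (α + ‖L‖) ≤ α / 4 := by
    have h := (le_div_iff₀ hden).mp hεsmall
    nlinarith
  have hεq : ε ≤ 1 / 4 := by nlinarith [mul_nonneg hε0 hL0]
  have hεL : ε * ‖L‖ ≤ α / 4 := by nlinarith [mul_nonneg hε0 hα.le]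
  -- ‖p‖ ≤ ε ‖ξ‖
  have hpnorm : ‖p‖ ≤ ε * n := by
    have hpe : p = (P - Q) ξ := by simp [hp, hQξ]
    rw [hpe]
    calc ‖(P - Q) ξ‖ ≤ ‖P - Q‖ * ‖ξ‖ := (P - Q).le_opNorm ξ
      _ ≤ ε * n := by rw [hn]; gcongr
  -- w ∈ Kᗮ
  have hwmem : w ∈ Kᗮ := K.sub_starProjection_mem_orthogonal ξ
  have hcw : α * ‖w‖ ^ 2 ≤ ⟪L w, w⟫ := hcoer w hwmem
  -- norm bounds on w
  have hw_lb : n - ε * n ≤ ‖w‖ := by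
    have h := norm_sub_norm_le ξ p
    simp only [← hw] at h
    linarith
  have hw_ub : ‖w‖ ≤ n + ε * n := by
    have h := norm_sub_le ξ p
    simp only [← hw] at h
    linarith
  have hlb0 : (0:ℝ) ≤ n - ε * n := by nlinarith
  -- decomposition
  have hdecomp : ⟪L ξ, ξ⟫ = ⟪L w, w⟫ + ⟪L w, p⟫ + ⟪L p, ξ⟫ := by
    have hLw : L w = L ξ - L p := by rw [hw, map_sub]
    rw [hLw, inner_sub_left, inner_sub_left, hw, inner_sub_right, inner_sub_right]
    ring
  -- coercive term
  have hA : α * ((n - ε * n) ^ 2) ≤ ⟪L w, w⟫ := by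
    have hsq : (n - ε * n) ^ 2 ≤ ‖w‖ ^ 2 := by nlinarith [norm_nonneg w]
    nlinarith
  -- cross term bounds
  have hcross1 : |⟪L w, p⟫| ≤ ‖L‖ * ‖w‖ * ‖p‖ := by
    calc |⟪L w, p⟫| ≤ ‖L w‖ * ‖p‖ := abs_real_inner_le_norm _ _
      _ ≤ ‖L‖ * ‖w‖ * ‖p‖ := by gcongr; exact L.le_opNorm w
  have hcross2 : |⟪L p, ξ⟫| ≤ ‖L‖ * ‖p‖ * n := by
    calc |⟪L p, ξ⟫| ≤ ‖L p‖ * ‖ξ‖ := abs_real_inner_le_norm _ _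
      _ ≤ ‖L‖ * ‖p‖ * n := by rw [hn]; gcongr; exact L.le_opNorm p
  have hp0 : (0:ℝ) ≤ ‖p‖ := norm_nonneg _
  have hw0 : (0:ℝ) ≤ ‖w‖ := norm_nonneg _
  have hB : -(‖L‖ * ((n + ε * n) * (ε * n))) ≤ ⟪L w, p⟫ := by
    have h1 := (abs_le.mp hcross1).1
    have h2 : ‖L‖ * ‖w‖ * ‖p‖ ≤ ‖L‖ * ((n + ε * n) * (ε * n)) := by
      rw [mul_assoc]
      exact mul_le_mul_of_nonneg_left (mul_le_mul hw_ub hpnorm hp0 (by linarith)) hL0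
    linarith
  have hC : -(‖L‖ * (ε * n) * n) ≤ ⟪L p, ξ⟫ := by
    have h1 := (abs_le.mp hcross2).1
    have h2 : ‖L‖ * ‖p‖ * n ≤ ‖L‖ * (ε * n) * n :=
      mul_le_mul_of_nonneg_right (mul_le_mul_of_nonneg_left hpnorm hL0) hn0
    linarith
  rw [hdecomp]
  have key1 : ε * (α + ‖L‖) * n ^ 2 ≤ α / 4 * n ^ 2 :=
    mul_le_mul_of_nonneg_right hεkey (sq_nonneg n)
  have key2 : ε * (ε * ‖L‖) ≤ (1/4) * (α / 4) :=
    mul_le_mul hεq hεL (mul_nonneg hε0 hL0) (by norm_num)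
  have key3 : ε * (ε * ‖L‖) * n ^ 2 ≤ (1/4) * (α / 4) * n ^ 2 :=
    mul_le_mul_of_nonneg_right key2 (sq_nonneg n)
  nlinarith [hA, hB, hC, key1, key3,
    mul_nonneg (mul_nonneg (mul_nonneg hε0 hε0) hα.le) (sq_nonneg n)]
end

section
/- Stability of orthogonal projections under perturbation of an orthonormal family. For every natural number n ≥ 1 there exists a constant C > 0, depending only on n, with the following property: for every real Hilbert space H, every orthonormal family y : Fin n → H, every family f : Fin n → H, and every ε with 0 ≤ ε ≤ 1/(4(n+1)) such that ‖f i − y i‖ ≤ ε for all i, the orthogonal projections P and Q of H onto the span of {y 0,…, y (n−1)} and onto the span of {f 0,…, f (n−1)} respectively satisfy ‖P − Q‖ ≤ C·ε in operator norm. -/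
open Submodule Finset

universe u

/-- The span of a finite family is finite-dimensional (instance form). -/
instance spanRangeFin_finiteDimensional {H : Type*} [NormedAddCommGroup H]
    [InnerProductSpace ℝ H] {n : ℕ} (f : Fin n → H) :
    FiniteDimensional ℝ (span ℝ (Set.range f)) :=
  FiniteDimensional.span_of_finite ℝ (Set.finite_range f)

variable {H : Type u} [NormedAddCommGroup H] [InnerProductSpace ℝ H]

/-- minimality of orthogonal projection -/
lemma proj_min (K : Submodule ℝ H) [HasOrthogonalProjection K] (u : H) {v : H} (hv : v ∈ K) :
    ‖u - (orthogonalProjection K u : H)‖ ≤ ‖u - v‖ := by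
  set p : H := (orthogonalProjection K u : H)
  have h1 : u - p ∈ Kᗮ := sub_starProjection_mem_orthogonal u
  have h2 : p - v ∈ K := K.sub_mem (orthogonalProjection K u).2 hv
  have hz : inner ℝ (u - p) (p - v) = (0 : ℝ) := by
    rw [real_inner_comm]
    exact (Submodule.mem_orthogonal K (u - p)).mp h1 (p - v) h2
  have hsum : (u - p) + (p - v) = u - v := by abel
  have := norm_add_sq_real (u - p) (p - v)
  rw [hsum, hz] at this
  nlinarith [norm_nonneg (u - p), norm_nonneg (u - v), sq_nonneg (‖p - v‖)]

lemma sum_sq_eq {n : ℕ} {y : Fin n → H} (hy : Orthonormal ℝ y) (a : Fin n → ℝ) :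
    ∑ i, a i ^ 2 = ‖∑ i, a i • y i‖ ^ 2 := by
  have h := hy.inner_sum a a Finset.univ
  rw [real_inner_self_eq_norm_sq] at h
  rw [h]
  simp [sq]

lemma abs_coeff_le {n : ℕ} {y : Fin n → H} (hy : Orthonormal ℝ y) (a : Fin n → ℝ) (i : Fin n) :
    |a i| ≤ ‖∑ j, a j • y j‖ := by
  have h1 : a i ^ 2 ≤ ∑ j, a j ^ 2 :=
    Finset.single_le_sum (fun j _ => sq_nonneg (a j)) (Finset.mem_univ i)
  rw [sum_sq_eq hy a] at h1
  nlinarith [sq_abs (a i), abs_nonneg (a i), norm_nonneg (∑ j, a j • y j)]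

/-- perturbation estimate on a linear combination -/
lemma comb_close {n : ℕ} {y f : Fin n → H} (hy : Orthonormal ℝ y) {ε : ℝ}
    (hf : ∀ i, ‖f i - y i‖ ≤ ε) (a : Fin n → ℝ) :
    ‖(∑ i, a i • y i) - ∑ i, a i • f i‖ ≤ n * ε * ‖∑ i, a i • y i‖ := by
  have h0 : (∑ i, a i • y i) - ∑ i, a i • f i = ∑ i, a i • (y i - f i) := by
    rw [← Finset.sum_sub_distrib]
    simp [smul_sub]
  rw [h0]
  calc ‖∑ i, a i • (y i - f i)‖ ≤ ∑ i, ‖a i • (y i - f i)‖ := norm_sum_le _ _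
    _ ≤ ∑ _i : Fin n, ‖∑ j, a j • y j‖ * ε := by
        refine Finset.sum_le_sum fun i _ => ?_
        rw [norm_smul, Real.norm_eq_abs]
        have h2 : ‖y i - f i‖ ≤ ε := by rw [norm_sub_rev]; exact hf i
        exact mul_le_mul (abs_coeff_le hy a i) h2 (norm_nonneg _) (norm_nonneg _)
    _ = n * ε * ‖∑ j, a j • y j‖ := by
        rw [Finset.sum_const, Finset.card_univ, Fintype.card_fin, nsmul_eq_mul]; ring

lemma approx_lem [CompleteSpace H] {n : ℕ} {y f : Fin n → H}
    (hy : Orthonormal ℝ y) {ε : ℝ} (hf : ∀ i, ‖f i - y i‖ ≤ ε)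
    {u : H} (hu : u ∈ span ℝ (Set.range y)) :
    ‖u - (orthogonalProjection (span ℝ (Set.range f)) u : H)‖ ≤ n * ε * ‖u‖ := by
  obtain ⟨a, ha⟩ := (mem_span_range_iff_exists_fun ℝ).mp hu
  have hv : (∑ i, a i • f i) ∈ span ℝ (Set.range f) :=
    Submodule.sum_mem _ fun i _ => Submodule.smul_mem _ _ (Submodule.subset_span ⟨i, rfl⟩)
  refine le_trans (proj_min _ u hv) ?_
  have := comb_close hy hf a
  rw [ha] at this
  exact this

lemma orth_bound [CompleteSpace H] {n : ℕ} {y f : Fin n → H}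
    (hy : Orthonormal ℝ y) {ε : ℝ} (hε : 0 ≤ ε) (hε' : ε ≤ 1 / (4 * ((n : ℝ) + 1)))
    (hf : ∀ i, ‖f i - y i‖ ≤ ε)
    {z : H} (hz : z ∈ (span ℝ (Set.range y))ᗮ) :
    ‖(orthogonalProjection (span ℝ (Set.range f)) z : H)‖ ≤ 2 * n * ε * ‖z‖ := by
  set w : H := (orthogonalProjection (span ℝ (Set.range f)) z : H) with hw
  obtain ⟨b, hb⟩ := (mem_span_range_iff_exists_fun ℝ).mp
    (orthogonalProjection (span ℝ (Set.range f)) z).2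
  set s : ℝ := ‖∑ i, b i • y i‖ with hs
  have hs0 : 0 ≤ s := norm_nonneg _
  have hpos : (0 : ℝ) < 4 * ((n : ℝ) + 1) := by positivity
  have h1 : ε * (4 * ((n : ℝ) + 1)) ≤ 1 := (le_div_iff₀ hpos).mp hε'
  have hnε : (n : ℝ) * ε ≤ 1 / 4 := by nlinarith [Nat.cast_nonneg (α := ℝ) n]
  have hdiff : ‖(∑ i, b i • y i) - w‖ ≤ n * ε * s := by
    rw [hw, ← hb]; exact comb_close hy hf b
  have hwn : 0 ≤ ‖w‖ := norm_nonneg w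
  have hsle : s ≤ 2 * ‖w‖ := by
    have h3 : s ≤ ‖(∑ i, b i • y i) - w‖ + ‖w‖ := by
      rw [hs]
      calc ‖∑ i, b i • y i‖ = ‖((∑ i, b i • y i) - w) + w‖ := by rw [sub_add_cancel]
        _ ≤ _ := norm_add_le _ _
    have h4 : (n : ℝ) * ε * s ≤ (1 / 4) * s := mul_le_mul_of_nonneg_right hnε hs0
    nlinarith
  -- inner product identity
  have hwm := (orthogonalProjection (span ℝ (Set.range f)) z).2
  have horth : z - w ∈ (span ℝ (Set.range f))ᗮ := sub_starProjection_mem_orthogonal z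
  have hip : ‖w‖ ^ 2 = (inner ℝ z w : ℝ) := by
    have h5 : inner ℝ w (z - w) = (0 : ℝ) :=
      (Submodule.mem_orthogonal _ (z - w)).mp horth w hwm
    have h6 : (inner ℝ z w : ℝ) = inner ℝ (w + (z - w)) w := by rw [show w + (z - w) = z by abel]
    rw [h6, inner_add_left, real_inner_self_eq_norm_sq, real_inner_comm, h5, add_zero]
  have hzy : ∀ i, inner ℝ z (y i) = (0 : ℝ) := fun i => by
    rw [real_inner_comm]
    exact (Submodule.mem_orthogonal _ z).mp hz (y i) (Submodule.subset_span ⟨i, rfl⟩)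
  have hinner : (inner ℝ z w : ℝ) = ∑ i, b i * (inner ℝ z (f i - y i) : ℝ) := by
    rw [hw, ← hb, inner_sum]
    refine Finset.sum_congr rfl fun i _ => ?_
    rw [real_inner_smul_right, inner_sub_right, hzy i, sub_zero]
  have hbound : (inner ℝ z w : ℝ) ≤ n * ε * s * ‖z‖ := by
    rw [hinner]
    calc ∑ i, b i * (inner ℝ z (f i - y i) : ℝ) ≤ ∑ i, |b i * (inner ℝ z (f i - y i) : ℝ)| :=
          Finset.sum_le_sum fun i _ => le_abs_self _
      _ ≤ ∑ _i : Fin n, s * (‖z‖ * ε) := by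
          refine Finset.sum_le_sum fun i _ => ?_
          rw [abs_mul]
          refine mul_le_mul (abs_coeff_le hy b i) ?_ (abs_nonneg _) hs0
          calc |(inner ℝ z (f i - y i) : ℝ)| ≤ ‖z‖ * ‖f i - y i‖ := abs_real_inner_le_norm _ _
            _ ≤ ‖z‖ * ε := mul_le_mul_of_nonneg_left (hf i) (norm_nonneg z)
      _ = n * ε * s * ‖z‖ := by
          rw [Finset.sum_const, Finset.card_univ, Fintype.card_fin, nsmul_eq_mul]; ring
  rcases eq_or_lt_of_le hwn with h0 | h0
  · rw [← h0]; positivity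
  · have hkey : ‖w‖ ^ 2 ≤ 2 * n * ε * ‖z‖ * ‖w‖ := by
      calc ‖w‖ ^ 2 = (inner ℝ z w : ℝ) := hip
        _ ≤ n * ε * s * ‖z‖ := hbound
        _ ≤ n * ε * (2 * ‖w‖) * ‖z‖ := by
            refine mul_le_mul_of_nonneg_right (mul_le_mul_of_nonneg_left hsle ?_) (norm_nonneg z)
            positivity
        _ = 2 * n * ε * ‖z‖ * ‖w‖ := by ring
    nlinarith

/-- Stability of orthogonal projections under perturbation of an orthonormal family:
for every `n ≥ 1` there is `C > 0` such that for every real Hilbert space `H`, every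
orthonormal family `y : Fin n → H` and every family `f` with `‖f i - y i‖ ≤ ε ≤ 1/(4(n+1))`,
the orthogonal projections onto `span {y i}` and onto `span {f i}` differ by at most
`C ε` in operator norm. -/
theorem orthogonal_projection_stability (n : ℕ) (hn : 1 ≤ n) :
    ∃ C : ℝ, 0 < C ∧
      ∀ (H : Type u) [NormedAddCommGroup H] [InnerProductSpace ℝ H] [CompleteSpace H],
        ∀ (y f : Fin n → H), Orthonormal ℝ y →
          ∀ ε : ℝ, 0 ≤ ε → ε ≤ 1 / (4 * ((n : ℝ) + 1)) → (∀ i : Fin n, ‖f i - y i‖ ≤ ε) →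
            ‖(span ℝ (Set.range y)).subtypeL.comp
                (orthogonalProjection (span ℝ (Set.range y))) -
              (span ℝ (Set.range f)).subtypeL.comp
                (orthogonalProjection (span ℝ (Set.range f)))‖ ≤ C * ε := by
  have hn' : (1 : ℝ) ≤ n := by exact_mod_cast hn
  refine ⟨3 * n, by linarith, ?_⟩
  intro H _ _ _ y f hy ε hε hε' hf
  have hCε : (0 : ℝ) ≤ 3 * n * ε := by positivity
  refine ContinuousLinearMap.opNorm_le_bound _ hCε fun x => ?_
  simp only [ContinuousLinearMap.sub_apply, ContinuousLinearMap.comp_apply,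
    Submodule.subtypeL_apply]
  set Y := span ℝ (Set.range y)
  set F := span ℝ (Set.range f)
  set px : H := (orthogonalProjection Y x : H) with hpx
  set z : H := x - px with hz
  have hzx : x = px + z := by rw [hz]; abel
  have hzo : z ∈ Yᗮ := sub_starProjection_mem_orthogonal x
  have hsplit : ((orthogonalProjection F x : F) : H) =
      (orthogonalProjection F px : H) + (orthogonalProjection F z : H) := by
    conv_lhs => rw [hzx]
    rw [map_add, Submodule.coe_add]
  have hpxmem : px ∈ Y := (orthogonalProjection Y x).2
  have h1 : ‖px - (orthogonalProjection F px : H)‖ ≤ n * ε * ‖px‖ :=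
    approx_lem hy hf hpxmem
  have h2 : ‖(orthogonalProjection F z : H)‖ ≤ 2 * n * ε * ‖z‖ :=
    orth_bound hy hε hε' hf hzo
  have hpxle : ‖px‖ ≤ ‖x‖ := by
    have := (orthogonalProjection Y).le_opNorm x
    have hno := orthogonalProjection_norm_le Y
    have : ‖orthogonalProjection Y x‖ ≤ ‖x‖ := by
      calc ‖orthogonalProjection Y x‖ ≤ ‖orthogonalProjection Y‖ * ‖x‖ :=
            (orthogonalProjection Y).le_opNorm x
        _ ≤ 1 * ‖x‖ := mul_le_mul_of_nonneg_right hno (norm_nonneg x)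
        _ = ‖x‖ := one_mul _
    simpa [hpx] using this
  have hzle : ‖z‖ ≤ ‖x‖ := by
    have := proj_min Y x (Submodule.zero_mem Y)
    rwa [sub_zero] at this
  have hdecomp : px - ((orthogonalProjection F x : F) : H) =
      (px - (orthogonalProjection F px : H)) - (orthogonalProjection F z : H) := by
    rw [hsplit]; abel
  rw [hdecomp]
  have hnε0 : (0 : ℝ) ≤ (n : ℝ) * ε := by positivity
  calc ‖(px - (orthogonalProjection F px : H)) - (orthogonalProjection F z : H)‖
      ≤ ‖px - (orthogonalProjection F px : H)‖ + ‖(orthogonalProjection F z : H)‖ :=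
        norm_sub_le _ _
    _ ≤ n * ε * ‖px‖ + 2 * n * ε * ‖z‖ := add_le_add h1 h2
    _ ≤ n * ε * ‖x‖ + 2 * n * ε * ‖x‖ := by
        refine add_le_add (mul_le_mul_of_nonneg_left hpxle hnε0)
          (mul_le_mul_of_nonneg_left hzle (by positivity))
    _ = 3 * n * ε * ‖x‖ := by ring
end

section
/- Decay from a sublinear (square-root) differential inequality. Let T ∈ ℝ, γ > 0, c ≥ 0, and let Λ : ℝ → ℝ be a function that is differentiable at every t ≥ T, satisfies Λ(t) ≥ 0 for all t ≥ T, and Λ′(t) + γ·Λ(t) ≤ c·√(Λ(t)) for all t ≥ T. Then for every t ≥ T, √(Λ(t)) ≤ e^{−γ(t−T)/2}·√(Λ(T)) + c/γ. -/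
/-- Decay from a sublinear (square-root) differential inequality: if `Λ ≥ 0` is
differentiable on `[T, ∞)` and `Λ′(t) + γ Λ(t) ≤ c √(Λ(t))` there, then
`√(Λ(t)) ≤ e^{-γ(t-T)/2} √(Λ(T)) + c/γ` for all `t ≥ T`. -/
theorem decay_of_sqrt_differential_inequality
    (T γ c : ℝ) (hγ : 0 < γ) (hc : 0 ≤ c) (Λ : ℝ → ℝ)
    (hdiff : ∀ t : ℝ, T ≤ t → DifferentiableAt ℝ Λ t)
    (hpos : ∀ t : ℝ, T ≤ t → 0 ≤ Λ t)
    (hineq : ∀ t : ℝ, T ≤ t → deriv Λ t + γ * Λ t ≤ c * Real.sqrt (Λ t)) :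
    ∀ t : ℝ, T ≤ t →
      Real.sqrt (Λ t) ≤ Real.exp (-γ * (t - T) / 2) * Real.sqrt (Λ T) + c / γ := by
  intro t ht
  -- main step: for every ε > 0, √(Λ t) ≤ e^{-γ(t-T)/2}(√(Λ T)+ε) + (c+ε)/γ
  have key : ∀ ε : ℝ, 0 < ε →
      Real.sqrt (Λ t) ≤ Real.exp (-γ * (t - T) / 2) * (Real.sqrt (Λ T) + ε) + (c + ε) / γ := by
    intro ε hε
    set b : ℝ → ℝ := fun s => Real.exp (-γ * (s - T) / 2) * (Real.sqrt (Λ T) + ε) + (c + ε) / γ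
      with hb
    have hbpos : ∀ s, 0 < b s := by
      intro s
      have h1 : 0 < Real.exp (-γ * (s - T) / 2) * (Real.sqrt (Λ T) + ε) :=
        mul_pos (Real.exp_pos _) (by positivity)
      have h2 : 0 < (c + ε) / γ := by positivity
      simpa [hb] using add_pos h1 h2
    have hbderiv : ∀ s : ℝ, HasDerivAt b
        (-γ / 2 * (Real.exp (-γ * (s - T) / 2) * (Real.sqrt (Λ T) + ε))) s := by
      intro s
      have h1 : HasDerivAt (fun s : ℝ => -γ * (s - T) / 2) (-γ / 2) s := by
        have := ((hasDerivAt_id s).sub_const T).const_mul (-γ)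
        simpa [mul_div_assoc, mul_comm, mul_left_comm] using this.div_const 2
      have h2 : HasDerivAt (fun s : ℝ => Real.exp (-γ * (s - T) / 2))
          (Real.exp (-γ * (s - T) / 2) * (-γ / 2)) s := h1.exp
      have h3 := (h2.mul_const (Real.sqrt (Λ T) + ε)).add_const ((c + ε) / γ)
      refine h3.congr_deriv ?_
      ring
    -- comparison: Λ ≤ b² on [T, t]
    have hB : ∀ s : ℝ, HasDerivAt (fun s => b s ^ 2)
        (2 * b s * (-γ / 2 * (Real.exp (-γ * (s - T) / 2) * (Real.sqrt (Λ T) + ε)))) s := by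
      intro s
      simpa [mul_comm, mul_left_comm, mul_assoc] using (hbderiv s).fun_pow 2
    have hcomp : Λ t ≤ b t ^ 2 := by
      refine image_le_of_deriv_right_lt_deriv_boundary (f' := deriv Λ)
        (fun s hs => ((hdiff s hs.1).continuousAt).continuousWithinAt)
        (fun s hs => ((hdiff s hs.1).hasDerivAt).hasDerivWithinAt)
        ?_ hB ?_ (Set.right_mem_Icc.2 ht)
      · -- initial condition
        have h0 : Real.sqrt (Λ T) ≤ b T := by
          have : b T = Real.sqrt (Λ T) + ε + (c + ε) / γ := by
            simp [hb]
          rw [this]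
          have : 0 ≤ ε + (c + ε) / γ := by positivity
          linarith
        calc Λ T = Real.sqrt (Λ T) ^ 2 := (Real.sq_sqrt (hpos T le_rfl)).symm
          _ ≤ b T ^ 2 := by
              have := Real.sqrt_nonneg (Λ T)
              nlinarith [hbpos T]
      · -- derivative comparison at touching points
        intro x hx heq
        have hxT : T ≤ x := hx.1
        have hsq : Real.sqrt (Λ x) = b x := by
          rw [heq, Real.sqrt_sq (hbpos x).le]
        have h1 := hineq x hxT
        rw [hsq, heq] at h1
        have h2 : deriv Λ x ≤ c * b x - γ * b x ^ 2 := by linarith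
        have h3 : 2 * b x * (-γ / 2 * (Real.exp (-γ * (x - T) / 2) * (Real.sqrt (Λ T) + ε)))
            = (c + ε) * b x - γ * b x ^ 2 := by
          have hbx : b x = Real.exp (-γ * (x - T) / 2) * (Real.sqrt (Λ T) + ε) + (c + ε) / γ := rfl
          rw [hbx]
          field_simp
          ring
        rw [h3]
        have : c * b x < (c + ε) * b x := by nlinarith [hbpos x]
        linarith
    -- take square roots
    have := Real.sqrt_le_sqrt hcomp
    rwa [Real.sqrt_sq (hbpos t).le] at this
  -- let ε → 0
  have hK : 0 < Real.exp (-γ * (t - T) / 2) + 1 / γ := by positivity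
  refine le_of_forall_pos_le_add fun δ hδ => ?_
  have hε : 0 < δ / (Real.exp (-γ * (t - T) / 2) + 1 / γ) := by positivity
  have h := key _ hε
  have : Real.exp (-γ * (t - T) / 2) * (Real.sqrt (Λ T) + δ / (Real.exp (-γ * (t - T) / 2) + 1 / γ))
      + (c + δ / (Real.exp (-γ * (t - T) / 2) + 1 / γ)) / γ
      = Real.exp (-γ * (t - T) / 2) * Real.sqrt (Λ T) + c / γ + δ := by
    field_simp
    ring
  linarith [this ▸ h]
end
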